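/- Let g, ĝ, g̃ be symmetric 4×4 real matrices with g invertible, f̂, f̃ antisymmetric 4×4 real matrices, Ĝ = ĝ + f̂, G̃ = g̃ + f̃, and let l ∈ ℝ⁴ satisfy lᵀĝl = 0 (l is null with respect to the constraint metric ĝ). Define the scalars α = lᵀ(g + G̃·g⁻¹·Ĝ)l and β = lᵀg̃l, and the covector v = g⁻¹·(β·Ĝ − α·g)·l = β·g⁻¹Ĝl − α·l. Then P(l)·v = 0, i.e., v lies in the kernel of the principal symbol P(l) = (lᵀgl)·g − (gl)(gl)ᵀ + (Ĝl)(G̃ᵀl)ᵀ. (These are the constraint-violating characteristic eigenvectors v₄, w₄ of the gauge-fixed Maxwell system.) -/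

import Mathlib

/-! With `s = lᵀgl` and `v = β·g⁻¹Ĝl − α·l`, one has `gv = β·Ĝl − α·gl`, and the two scalar
products entering `P(l)v` are `(gl)·v = −αs` (as `lᵀĜl = 0`) and `(G̃ᵀl)·v = −βs`
(as `lᵀG̃g⁻¹Ĝl = α − s`). Hence `P(l)v = s(βĜl − αgl) + αs·gl − βs·Ĝl = 0`. -/

open Matrix

namespace Matrix

variable {n R : Type*} [Fintype n] [CommRing R]

theorem dotProduct_mulVec_self_eq_zero_of_transpose_eq_neg [IsAddTorsionFree R]
    {f : Matrix n n R} (hf : fᵀ = -f) (l : n → R) : l ⬝ᵥ f *ᵥ l = 0 := by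
  refine self_eq_neg.mp ?_
  calc l ⬝ᵥ f *ᵥ l = l ⬝ᵥ fᵀ *ᵥ l := dotProduct_transpose_mulVec f l l |>.symm
    _ = -(l ⬝ᵥ f *ᵥ l) := by rw [hf, neg_mulVec, dotProduct_neg]

theorem dotProduct_add_mulVec_self_of_transpose_eq_neg [IsAddTorsionFree R]
    (g : Matrix n n R) {f : Matrix n n R} (hf : fᵀ = -f) (l : n → R) :
    l ⬝ᵥ (g + f) *ᵥ l = l ⬝ᵥ g *ᵥ l := by
  rw [add_mulVec, dotProduct_add, dotProduct_mulVec_self_eq_zero_of_transpose_eq_neg hf, add_zero]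

end Matrix

section PrincipalSymbol

variable {n R : Type*} [Fintype n] [CommRing R]

def principalSymbol (g Gh Gt : Matrix n n R) (l : n → R) : Matrix n n R :=
  (l ⬝ᵥ g *ᵥ l) • g - vecMulVec (g *ᵥ l) (g *ᵥ l) + vecMulVec (Gh *ᵥ l) (Gtᵀ *ᵥ l)

theorem principalSymbol_mulVec (g Gh Gt : Matrix n n R) (l v : n → R) :
    principalSymbol g Gh Gt l *ᵥ v =
      (l ⬝ᵥ g *ᵥ l) • g *ᵥ v - (g *ᵥ l ⬝ᵥ v) • g *ᵥ l + (Gtᵀ *ᵥ l ⬝ᵥ v) • Gh *ᵥ l := by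
  simp only [principalSymbol, add_mulVec, sub_mulVec, smul_mulVec, vecMulVec_mulVec,
    op_smul_eq_smul]

variable [DecidableEq n]

theorem principalSymbol_mulVec_eq_zero {g : Matrix n n R} (hg : gᵀ = g) (hdet : IsUnit g.det)
    (Gh Gt : Matrix n n R) {l : n → R} (hl : l ⬝ᵥ Gh *ᵥ l = 0) :
    principalSymbol g Gh Gt l *ᵥ
      ((g⁻¹ * ((l ⬝ᵥ Gt *ᵥ l) • Gh - (l ⬝ᵥ (g + Gt * g⁻¹ * Gh) *ᵥ l) • g)) *ᵥ l) = 0 := by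
  set s := l ⬝ᵥ g *ᵥ l
  set β := l ⬝ᵥ Gt *ᵥ l
  set α := l ⬝ᵥ (g + Gt * g⁻¹ * Gh) *ᵥ l
  have hα : α = s + l ⬝ᵥ Gt *ᵥ g⁻¹ *ᵥ Gh *ᵥ l := by
    simp only [α, s, add_mulVec, mulVec_mulVec, dotProduct_add, Matrix.mul_assoc]
  have hv : (g⁻¹ * (β • Gh - α • g)) *ᵥ l = β • g⁻¹ *ᵥ Gh *ᵥ l - α • l := by
    rw [mul_sub, Matrix.mul_smul, Matrix.mul_smul, nonsing_inv_mul _ hdet, sub_mulVec, smul_mulVec,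
      smul_mulVec, mulVec_mulVec, one_mulVec]
  have hgv : g *ᵥ (β • g⁻¹ *ᵥ Gh *ᵥ l - α • l) = β • Gh *ᵥ l - α • g *ᵥ l := by
    rw [mulVec_sub, mulVec_smul, mulVec_smul, mulVec_mulVec, mul_nonsing_inv _ hdet, one_mulVec]
  have h_gl : g *ᵥ l ⬝ᵥ (β • g⁻¹ *ᵥ Gh *ᵥ l - α • l) = -(α * s) := by
    rw [dotProduct_comm, ← dotProduct_transpose_mulVec, hg, hgv, dotProduct_sub,
      dotProduct_smul, dotProduct_smul, hl]
    simp only [smul_eq_mul, s]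
    ring
  have h_Gtl : Gtᵀ *ᵥ l ⬝ᵥ (β • g⁻¹ *ᵥ Gh *ᵥ l - α • l) = -(β * s) := by
    rw [dotProduct_comm, ← dotProduct_transpose_mulVec, transpose_transpose, mulVec_sub,
      mulVec_smul, mulVec_smul, dotProduct_sub, dotProduct_smul, dotProduct_smul]
    simp only [smul_eq_mul, β]
    linear_combination -β * hα
  rw [hv, principalSymbol_mulVec, h_gl, h_Gtl, hgv]
  module

end PrincipalSymbol

theorem principalSymbol_constraintViolating_eigenvector_general
    (g ghat gtil fhat ftil : Matrix (Fin 4) (Fin 4) ℝ)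
    (hg : gᵀ = g)
    (hfhat : fhatᵀ = -fhat) (hftil : ftilᵀ = -ftil)
    (hginv : IsUnit g.det) (l : Fin 4 → ℝ)
    (hl : l ⬝ᵥ ghat.mulVec l = 0) :
    ((l ⬝ᵥ g.mulVec l) • g - Matrix.vecMulVec (g.mulVec l) (g.mulVec l) +
        Matrix.vecMulVec ((ghat + fhat).mulVec l) ((gtil + ftil)ᵀ.mulVec l)).mulVec
      ((g⁻¹ *
          ((l ⬝ᵥ gtil.mulVec l) • (ghat + fhat) -
            (l ⬝ᵥ ((g + (gtil + ftil) * g⁻¹ * (ghat + fhat)).mulVec l)) • g)).mulVec l) =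
      0 := by
  rw [← dotProduct_add_mulVec_self_of_transpose_eq_neg gtil hftil l]
  exact principalSymbol_mulVec_eq_zero hg hginv _ _
    (by rwa [dotProduct_add_mulVec_self_of_transpose_eq_neg ghat hfhat])

/-- suppose `g` is invertible and `l` is null with respect to the
constraint metric `ĝ` (`lᵀĝl = 0`). With `α = lᵀ(g + G̃·g⁻¹·Ĝ)l`, `β = lᵀg̃l`
and `v = g⁻¹·(β·Ĝ − α·g)·l`, the covector `v` lies in the kernel of the
principal symbol `P(l) = (lᵀgl)·g − (gl)(gl)ᵀ + (Ĝl)(G̃ᵀl)ᵀ`, where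
`Ĝ = ĝ + f̂`, `G̃ = g̃ + f̃`. -/
theorem principalSymbol_constraintViolating_eigenvector
    (g ghat gtil fhat ftil : Matrix (Fin 4) (Fin 4) ℝ)
    (hg : gᵀ = g) (hghat : ghatᵀ = ghat) (hgtil : gtilᵀ = gtil)
    (hfhat : fhatᵀ = -fhat) (hftil : ftilᵀ = -ftil)
    (hginv : IsUnit g.det) (l : Fin 4 → ℝ)
    (hl : l ⬝ᵥ ghat.mulVec l = 0) :
    ((l ⬝ᵥ g.mulVec l) • g - Matrix.vecMulVec (g.mulVec l) (g.mulVec l) +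
        Matrix.vecMulVec ((ghat + fhat).mulVec l) ((gtil + ftil)ᵀ.mulVec l)).mulVec
      ((g⁻¹ *
          ((l ⬝ᵥ gtil.mulVec l) • (ghat + fhat) -
            (l ⬝ᵥ ((g + (gtil + ftil) * g⁻¹ * (ghat + fhat)).mulVec l)) • g)).mulVec l) =
      0 :=
  principalSymbol_constraintViolating_eigenvector_general g ghat gtil fhat ftil hg hfhat hftil hginv
    l hl
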